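/- (Theorem 4.8, (3) ⇒ (1)) If (Q_1, …, Q_c) is a regular sequence in ℂ[x_1, …, x_n], then I = ker φ equals the ideal (f_1, …, f_c) ⊆ S; in particular, M(F) ⊂ ℙ^{n+c} is a complete intersection of codimension c. -/

import Mathlib

open MvPolynomial

noncomputable section

/-- The polynomial ring `S = ℂ[w_0, w_1, …, w_{n+c}]`. -/
abbrev S2 (n c : ℕ) := MvPolynomial (Fin (n + c + 1)) ℂ

/-- The index of the variable `w_0`. -/
def wVar0 (n c : ℕ) : Fin (n + c + 1) := ⟨0, by omega⟩

/-- The index of the variable `w_i`, `1 ≤ i ≤ n`. -/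
def wVarX (n c : ℕ) (i : Fin n) : Fin (n + c + 1) := ⟨(i : ℕ) + 1, by have := i.isLt; omega⟩

/-- The index of the variable `w_{n+j}`, `1 ≤ j ≤ c`. -/
def wVarQ (n c : ℕ) (j : Fin c) : Fin (n + c + 1) := ⟨n + 1 + (j : ℕ), by have := j.isLt; omega⟩

/-- The quadric `f_j = w_0 · w_{n+j} − Q_j(w_1, …, w_n)`. -/
def fq (n c : ℕ) (Q : Fin c → MvPolynomial (Fin n) ℂ) (j : Fin c) : S2 n c :=
  X (wVar0 n c) * X (wVarQ n c j) - rename (wVarX n c) (Q j)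

/-- The ℂ-algebra homomorphism `φ : S → ℂ[t, x_1, …, x_n]` sending
`w_0 ↦ t²`, `w_i ↦ t·x_i` and `w_{n+j} ↦ Q_j(x_1, …, x_n)`; here the variable
`none` plays the role of `t` and `some i` the role of `x_i`. -/
def phi2 (n c : ℕ) (Q : Fin c → MvPolynomial (Fin n) ℂ) :
    S2 n c →ₐ[ℂ] MvPolynomial (Option (Fin n)) ℂ :=
  aeval (fun v : Fin (n + c + 1) =>
    if h0 : (v : ℕ) = 0 then X none ^ 2
    else if h : (v : ℕ) ≤ n then X none * X (some ⟨(v : ℕ) - 1, by omega⟩)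
    else rename some (Q ⟨(v : ℕ) - (n + 1), by have := v.isLt; omega⟩))

/-!
The substitution `w_v ↦ w_0 w_v` multiplies a form of degree `d` by `w_0 ^ d`; modulo
`J = (f_1, …, f_c)` it agrees with `φ` followed by `t ↦ w_0, x_i ↦ w_i`, because
`w_0 w_{n+j} ≡ Q_j(w)` mod `J`. Since `φ` doubles degrees, `ker φ` is spanned by forms, and
every form `g ∈ ker φ` of degree `d` satisfies `w_0 ^ d g ∈ J`. So it suffices that `w_0` is a
nonzerodivisor modulo `J`. Setting `w_0 = 0` turns `f_j` into `-Q_j`, and `(Q_1, …, Q_c)` stays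
regular after adjoining variables; this lets one add the `f_j` to the ideal one at a time,
keeping `w_0` a nonzerodivisor.
-/

open RingTheory.Sequence

namespace MvPolynomial

theorem IsHomogeneous.aeval_mul_left {R S σ : Type*} [CommSemiring R] [CommSemiring S]
    [Algebra R S]
    {p : MvPolynomial σ R} {d : ℕ} (hp : p.IsHomogeneous d) (a : S) (f : σ → S) :
    MvPolynomial.aeval (fun i => a * f i) p = a ^ d * MvPolynomial.aeval f p := by
  conv_lhs => rw [p.as_sum]
  conv_rhs => rw [p.as_sum]
  simp only [map_sum, Finset.mul_sum]
  refine Finset.sum_congr rfl fun m hm => ?_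
  have hdeg : ∑ i ∈ m.support, m i = d := by
    simpa [Finsupp.weight_apply, Finsupp.sum] using hp (mem_support_iff.mp hm)
  simp only [aeval_monomial, mul_pow, Finsupp.prod_mul]
  rw [Finsupp.prod, Finset.prod_pow_eq_pow_sum, hdeg]
  ring

theorem map_homogeneousComponent_eq_zero {R σ τ : Type*} [CommSemiring R]
    {φ : MvPolynomial σ R →ₐ[R] MvPolynomial τ R} {m : ℕ} (hm : m ≠ 0)
    (hφ : ∀ v, (φ (X v)).IsHomogeneous m) {p : MvPolynomial σ R} (hp : φ p = 0) (d : ℕ) :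
    φ (homogeneousComponent d p) = 0 := by
  have hhom : ∀ e, (φ (homogeneousComponent e p)).IsHomogeneous (m * e) := fun e => by
    rw [aeval_unique φ]
    exact (homogeneousComponent_isHomogeneous e p).aeval _ hφ
  have hsum := congrArg (homogeneousComponent (m * d)) hp
  rw [← sum_homogeneousComponent p, map_sum, map_sum, map_zero,
    Finset.sum_eq_single d] at hsum
  · rwa [homogeneousComponent_of_mem (hhom d), if_pos rfl] at hsum
  · intro e _ hed
    rw [homogeneousComponent_of_mem (hhom e), if_neg (by simpa [hm] using Ne.symm hed)]
  · intro hd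
    rw [homogeneousComponent_eq_zero d p (by simpa [Nat.lt_succ_iff] using hd), map_zero,
      map_zero]

theorem sub_aeval_update_zero_mem_span_X {R σ : Type*} [CommRing R] [DecidableEq σ] (v : σ)
    (p : MvPolynomial σ R) :
    p - aeval (Function.update X v 0) p ∈ Ideal.span {X v} := by
  rw [← Ideal.Quotient.eq, ← Ideal.Quotient.mkₐ_eq_mk R, ← AlgHom.comp_apply]
  congr 1
  refine (algHom_ext fun u => ?_).symm
  rcases eq_or_ne u v with rfl | hu
  · simp
  · simp [hu]

end MvPolynomial

namespace RingTheory.Sequence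

theorem IsWeaklyRegular.map_rename {R σ τ : Type*} [CommRing R] {ι : σ → τ}
    (hι : Function.Injective ι) {rs : List (MvPolynomial σ R)}
    (h : IsWeaklyRegular (MvPolynomial σ R) rs) :
    IsWeaklyRegular (MvPolynomial τ R) (rs.map (rename ι)) := by
  classical
  let e : τ ≃ ((Set.range ι)ᶜ : Set τ) ⊕ σ := (Equiv.Set.sumCompl (Set.range ι)).symm.trans
    ((Equiv.sumComm _ _).trans
      (Equiv.sumCongr (Equiv.refl _) (Equiv.ofInjective ι hι).symm))
  let E := (renameEquiv R e).trans (sumAlgEquiv R _ σ)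
  have he : ∀ i, e (ι i) = Sum.inr i := fun i => by
    simp [e, Equiv.Set.sumCompl_symm_apply_of_mem (Set.mem_range_self i),
      Equiv.ofInjective_symm_apply]
  have hE : ∀ p, E (rename ι p) = C p := fun p => by
    simpa [E, rename_rename, Function.comp_def, he] using
      AlgHom.congr_fun (sumAlgEquiv_comp_rename_inr R ((Set.range ι)ᶜ : Set τ) σ) p
  refine (E.toAddEquiv.isWeaklyRegular_congr (bs := rs.map C) ?_).mpr (h.of_flat)
  refine List.forall₂_map_left_iff.mpr (List.forall₂_map_right_iff.mpr
    (List.forall₂_same.mpr fun p _ x => ?_))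
  simp [hE]

end RingTheory.Sequence

section NonZeroDivisorModulo

variable {B : Type*} [CommRing B]

theorem isSMulRegular_quotient_sup_span {x f : B} {K : Ideal B}
    (hx : IsSMulRegular (B ⧸ K) x) (hf : IsSMulRegular (B ⧸ Ideal.span {x} ⊔ K) f) :
    IsSMulRegular (B ⧸ K ⊔ Ideal.span {f}) x := by
  simp only [isSMulRegular_quotient_iff_mem_of_smul_mem, smul_eq_mul] at *
  intro g hg
  obtain ⟨u, hu, _, hv, hxg⟩ := Submodule.mem_sup.mp hg
  obtain ⟨h, rfl⟩ := Ideal.mem_span_singleton'.mp hv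
  have hh : h ∈ Ideal.span {x} ⊔ K := hf h <| by
    rw [show f * h = x * g - u by linear_combination hxg]
    exact sub_mem (Ideal.mem_sup_left (Ideal.mem_span_singleton'.mpr ⟨g, mul_comm _ _⟩))
      (Ideal.mem_sup_right hu)
  obtain ⟨_, hy, u', hu', rfl⟩ := Submodule.mem_sup.mp hh
  obtain ⟨e, rfl⟩ := Ideal.mem_span_singleton'.mp hy
  have hg' : g - e * f ∈ K := hx _ <| by
    rw [show x * (g - e * f) = u + u' * f by linear_combination -hxg]
    exact add_mem hu (Ideal.mul_mem_right _ _ hu')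
  rw [show g = (g - e * f) + e * f by ring]
  exact add_mem (Ideal.mem_sup_left hg') (Ideal.mem_sup_right (Ideal.mul_mem_left _ _
    (Ideal.mem_span_singleton_self f)))

theorem isSMulRegular_quotient_span_sup_of_map (ψ : B →+* B) {x : B} (hψx : ψ x = 0)
    (hψ : ∀ b, b - ψ b ∈ Ideal.span {x}) {K : Ideal B} {f : B}
    (hf : IsSMulRegular (B ⧸ K.map ψ) (ψ f)) :
    IsSMulRegular (B ⧸ Ideal.span {x} ⊔ K) f := by
  rw [isSMulRegular_quotient_iff_mem_of_smul_mem] at *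
  have hmap : (Ideal.span {x} ⊔ K).map ψ = K.map ψ := by
    rw [Ideal.map_sup, Ideal.map_span, Set.image_singleton, hψx,
      Ideal.span_singleton_eq_bot.mpr rfl, bot_sup_eq]
  have hle : K.map ψ ≤ Ideal.span {x} ⊔ K := Ideal.map_le_iff_le_comap.mpr fun b hb => by
    rw [Ideal.mem_comap, show ψ b = b - (b - ψ b) by ring]
    exact sub_mem (Ideal.mem_sup_right hb) (Ideal.mem_sup_left (hψ b))
  intro h hh
  have hψh : ψ h ∈ K.map ψ := hf _ <| by
    simpa [← hmap, mul_comm] using Ideal.mem_map_of_mem ψ hh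
  rw [show h = (h - ψ h) + ψ h by ring]
  exact add_mem (Ideal.mem_sup_left (hψ h)) (hle hψh)

theorem isSMulRegular_quotient_ofList_of_map (ψ : B →+* B) {x : B} (hψx : ψ x = 0)
    (hψ : ∀ b, b - ψ b ∈ Ideal.span {x}) (hx : IsSMulRegular B x) (fs : List B)
    (hfs : IsWeaklyRegular B (fs.map ψ)) : IsSMulRegular (B ⧸ Ideal.ofList fs) x := by
  induction fs using List.reverseRecOn with
  | nil =>
    rw [isSMulRegular_quotient_iff_mem_of_smul_mem]
    simp only [Ideal.ofList_nil, Submodule.mem_bot]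
    exact fun g hg => hx (hg.trans (smul_zero x).symm)
  | append_singleton fs f ih =>
    rw [List.map_append, List.map_singleton, isWeaklyRegular_append_iff,
      isWeaklyRegular_singleton_iff, ← Ideal.map_ofList, smul_eq_mul, Ideal.mul_top] at hfs
    rw [Ideal.ofList_append, Ideal.ofList_singleton]
    exact isSMulRegular_quotient_sup_span (ih hfs.1)
      (isSMulRegular_quotient_span_sup_of_map ψ hψx hψ hfs.2)

end NonZeroDivisorModulo

section EulerSymmetric

variable {n c : ℕ}

theorem wVarX_injective : Function.Injective (wVarX n c) := fun i j h => by
  simpa [wVarX, Fin.ext_iff] using h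

theorem wVarX_ne_wVar0 (i : Fin n) : wVarX n c i ≠ wVar0 n c := by
  simp [wVarX, wVar0, Fin.ext_iff]

theorem wVar_cases (v : Fin (n + c + 1)) :
    v = wVar0 n c ∨ (∃ i, v = wVarX n c i) ∨ ∃ j, v = wVarQ n c j := by
  rcases v with ⟨v, hv⟩
  by_cases h0 : v = 0
  · exact Or.inl (Fin.ext h0)
  by_cases hx : v ≤ n
  · exact Or.inr (Or.inl ⟨⟨v - 1, by omega⟩, Fin.ext (by simp [wVarX]; omega)⟩)
  · exact Or.inr (Or.inr ⟨⟨v - (n + 1), by omega⟩, Fin.ext (by simp [wVarQ]; omega)⟩)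

variable (Q : Fin c → MvPolynomial (Fin n) ℂ)

theorem phi2_X_wVar0 : phi2 n c Q (X (wVar0 n c)) = X none ^ 2 := by
  simp [phi2, wVar0]

theorem phi2_X_wVarX (i : Fin n) : phi2 n c Q (X (wVarX n c i)) = X none * X (some i) := by
  simp [phi2, wVarX]

theorem phi2_X_wVarQ (j : Fin c) : phi2 n c Q (X (wVarQ n c j)) = rename some (Q j) := by
  have hj : ¬n + 1 + (j : ℕ) ≤ n := by omega
  simp [phi2, wVarQ, hj]

theorem phi2_rename_wVarX (q : MvPolynomial (Fin n) ℂ) :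
    phi2 n c Q (rename (wVarX n c) q) = aeval (fun i => X none * X (some i)) q := by
  rw [aeval_unique (phi2 n c Q), aeval_rename]
  simp only [Function.comp_def, phi2_X_wVarX]

variable {Q}

theorem isHomogeneous_phi2_X (hhom : ∀ j, (Q j).IsHomogeneous 2) (v : Fin (n + c + 1)) :
    (phi2 n c Q (X v)).IsHomogeneous 2 := by
  rcases wVar_cases v with rfl | ⟨i, rfl⟩ | ⟨j, rfl⟩
  · simpa [phi2_X_wVar0] using isHomogeneous_X_pow (R := ℂ) none 2
  · simpa [phi2_X_wVarX] using (isHomogeneous_X ℂ none).mul (isHomogeneous_X ℂ (some i))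
  · simpa [phi2_X_wVarQ] using (hhom j).rename_isHomogeneous

theorem phi2_fq (hhom : ∀ j, (Q j).IsHomogeneous 2) (j : Fin c) :
    phi2 n c Q (fq n c Q j) = 0 := by
  rw [fq, map_sub, map_mul, phi2_X_wVar0, phi2_X_wVarQ, phi2_rename_wVarX,
    (hhom j).aeval_mul_left, rename_eq_aeval, Function.comp_def, sub_self]

theorem X_wVar0_pow_mul_mem_of_phi2_eq_zero {g : S2 n c} {d : ℕ} (hg : g.IsHomogeneous d)
    (hφg : phi2 n c Q g = 0) :
    X (wVar0 n c) ^ d * g ∈ Ideal.span (Set.range (fq n c Q)) := by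
  set J := Ideal.span (Set.range (fq n c Q))
  let σ : MvPolynomial (Option (Fin n)) ℂ →ₐ[ℂ] S2 n c :=
    rename fun o => o.elim (wVar0 n c) (wVarX n c)
  have hcomp : (Ideal.Quotient.mkₐ ℂ J).comp (σ.comp (phi2 n c Q)) =
      (Ideal.Quotient.mkₐ ℂ J).comp (aeval fun v => X (wVar0 n c) * X v) := by
    refine algHom_ext fun v => ?_
    rcases wVar_cases v with rfl | ⟨i, rfl⟩ | ⟨j, rfl⟩
    · simp [σ, phi2_X_wVar0, pow_two]
    · simp [σ, phi2_X_wVarX]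
    · simp only [AlgHom.comp_apply, phi2_X_wVarQ, aeval_X, σ, rename_rename,
        Ideal.Quotient.mkₐ_eq_mk]
      rw [Ideal.Quotient.eq, show (fun o => o.elim (wVar0 n c) (wVarX n c)) ∘ some = wVarX n c
        from rfl, ← neg_sub, neg_mem_iff]
      exact Ideal.subset_span ⟨j, rfl⟩
  have := AlgHom.congr_fun hcomp g
  simp only [AlgHom.comp_apply, hφg, map_zero, hg.aeval_mul_left, aeval_X_left_apply] at this
  exact Ideal.Quotient.eq_zero_iff_mem.mp this.symm

theorem isSMulRegular_X_wVar0_quotient_span_fq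
    (hreg : IsWeaklyRegular (MvPolynomial (Fin n) ℂ) (List.ofFn Q)) :
    IsSMulRegular (S2 n c ⧸ Ideal.span (Set.range (fq n c Q))) (X (wVar0 n c) : S2 n c) := by
  let ψ : S2 n c →+* S2 n c :=
    (aeval (R := ℂ) (Function.update X (wVar0 n c) (0 : S2 n c))).toRingHom
  have hψ0 : ψ (X (wVar0 n c)) = 0 := by simp [ψ]
  have hψ : ∀ q, ψ (rename (wVarX n c) q) = rename (wVarX n c) q := fun q => by
    change aeval _ (rename _ q) = _
    rw [aeval_rename, rename_eq_aeval,
      Function.update_comp_eq_of_forall_ne _ _ fun i => wVarX_ne_wVar0 (c := c) i]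
  -- the `-f_j` rather than the `f_j`, so that `ψ` maps them to the `Q_j` on the nose
  have hfs : (List.ofFn fun j => -fq n c Q j).map ψ = (List.ofFn Q).map (rename (wVarX n c)) := by
    simp [List.map_ofFn, Function.comp_def, fq, hψ0, hψ]
  have h := isSMulRegular_quotient_ofList_of_map ψ hψ0
    (sub_aeval_update_zero_mem_span_X _) (IsSMulRegular.of_ne_zero (X_ne_zero _))
    (List.ofFn fun j => -fq n c Q j) (hfs ▸ hreg.map_rename wVarX_injective)
  have hspan :
      Ideal.ofList (List.ofFn fun j => -fq n c Q j) = Ideal.span (Set.range (fq n c Q)) := by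
    rw [Ideal.ofList, Ideal.span, ← Submodule.span_neg]
    congr 1
    ext r
    simp [List.mem_ofFn, neg_eq_iff_eq_neg]
  rwa [hspan] at h

end EulerSymmetric

theorem euler_symmetric_complete_intersection_of_regular_sequence_general
    (n c : ℕ)
    (Q : Fin c → MvPolynomial (Fin n) ℂ)
    (hhom : ∀ j, (Q j).IsHomogeneous 2)
    (hreg : RingTheory.Sequence.IsWeaklyRegular (MvPolynomial (Fin n) ℂ) (List.ofFn Q)) :
    RingHom.ker (phi2 n c Q) = Ideal.span (Set.range (fq n c Q)) := by
  have hw0 := isSMulRegular_X_wVar0_quotient_span_fq hreg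
  refine le_antisymm (fun g hg => ?_) (Ideal.span_le.mpr ?_)
  · rw [← sum_homogeneousComponent g]
    refine Ideal.sum_mem _ fun d _ =>
      (isSMulRegular_quotient_iff_mem_of_smul_mem _ _).mp (hw0.pow d) _ ?_
    exact X_wVar0_pow_mul_mem_of_phi2_eq_zero (homogeneousComponent_isHomogeneous d g)
      (map_homogeneousComponent_eq_zero two_ne_zero (isHomogeneous_phi2_X hhom) hg d)
  · rintro _ ⟨j, rfl⟩
    exact phi2_fq hhom j

/-- (Theorem 4.8, (3) ⇒ (1)) If `(Q_1, …, Q_c)` is a regular sequence in `ℂ[x_1, …, x_n]`,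
then `I = ker φ` equals the ideal `(f_1, …, f_c)`; in particular `M(F) ⊂ ℙ^{n+c}` is a
complete intersection of codimension `c`. -/
theorem euler_symmetric_complete_intersection_of_regular_sequence
    (n c : ℕ) (hn : 1 ≤ n) (hc : 1 ≤ c)
    (Q : Fin c → MvPolynomial (Fin n) ℂ)
    (hhom : ∀ j, (Q j).IsHomogeneous 2)
    (hli : LinearIndependent ℂ Q)
    (hreg : RingTheory.Sequence.IsWeaklyRegular (MvPolynomial (Fin n) ℂ) (List.ofFn Q)) :
    RingHom.ker (phi2 n c Q) = Ideal.span (Set.range (fq n c Q)) :=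
  euler_symmetric_complete_intersection_of_regular_sequence_general n c Q hhom hreg
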